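/- arXiv:1903.10031 — 7 statements merged into one kernel-verified Lean document; each statement's English description precedes it below -/
import Mathlib

section
/- Let H₁ and H₂ be reflexive patterns such that every H₁-arc-coloured digraph has an independent H₁-absorbent set, and likewise for H₂. Then every (H₁ • H₂)-arc-coloured digraph has an independent (H₁ • H₂)-absorbent set, where H₁ • H₂ is the linear sum of the patterns (disjoint union of H₁ and H₂ plus all arcs from V(H₁) to V(H₂)). -/
/-!
Let `K₁` be an independent `H₁`-absorbent set of the spanning subdigraph of arcs with colours in
`H₁`. Every arc of `D` inside `K₁` then has a colour in `H₂`, so an independent `H₂`-absorbent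
set `K` of `D[K₁]` is independent in `D`. A vertex outside `K₁` reaches `K₁` by a path with
colours in `H₁`, and from there `K` by a path with colours in `H₂` inside `K₁`. Every colour of
`H₁` dominates every colour of `H₂` in `H₁ • H₂`, so cutting the first path at its first vertex
on the second one and continuing along the second gives an `(H₁ • H₂)`-path.
-/

/-- The list of colours along a list of vertices, given an arc-colouring `c`. -/
def colourList {α β : Type*} (c : β → β → α) : List β → List α
  | a :: b :: t => c a b :: colourList c (b :: t)
  | _ => []

/-- An `H`-walk in the `H`-arc-coloured digraph `(D, c)`: a directed walk with at least one
arc whose sequence of arc-colours is a directed walk in the pattern `H`. -/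
def IsHWalk {α β : Type*} (H : α → α → Prop) (D : β → β → Prop) (c : β → β → α)
    (l : List β) : Prop :=
  2 ≤ l.length ∧ l.Chain' D ∧ (colourList c l).Chain' H

/-- An `H`-path: an `H`-walk whose vertices are pairwise distinct. -/
def IsHPath {α β : Type*} (H : α → α → Prop) (D : β → β → Prop) (c : β → β → α)
    (l : List β) : Prop :=
  IsHWalk H D c l ∧ l.Nodup

/-- `u` reaches `v` by `H`-paths. -/
def HPathReach {α β : Type*} (H : α → α → Prop) (D : β → β → Prop) (c : β → β → α)
    (u v : β) : Prop :=
  ∃ l, IsHPath H D c l ∧ l.head? = some u ∧ l.getLast? = some v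

/-- `u` reaches `v` by `H`-walks. -/
def HWalkReach {α β : Type*} (H : α → α → Prop) (D : β → β → Prop) (c : β → β → α)
    (u v : β) : Prop :=
  ∃ l, IsHWalk H D c l ∧ l.head? = some u ∧ l.getLast? = some v

/-- A digraph (binary relation) is loopless. -/
def Loopless {β : Type*} (D : β → β → Prop) : Prop := ∀ v, ¬ D v v

/-- `S` is an independent set of the digraph `D` (no arc of `D` joins two of its vertices). -/
def Indep {β : Type*} (D : β → β → Prop) (S : Set β) : Prop :=
  ∀ u ∈ S, ∀ v ∈ S, ¬ D u v

/-- `S` is independent by `H`-paths. -/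
def HIndep {α β : Type*} (H : α → α → Prop) (D : β → β → Prop) (c : β → β → α)
    (S : Set β) : Prop :=
  ∀ u ∈ S, ∀ v ∈ S, u ≠ v → ¬ HPathReach H D c u v

/-- `S` is absorbent by `H`-paths. -/
def HAbsorbent {α β : Type*} (H : α → α → Prop) (D : β → β → Prop) (c : β → β → α)
    (S : Set β) : Prop :=
  ∀ u ∉ S, ∃ v ∈ S, HPathReach H D c u v

/-- An `H`-kernel: independent and absorbent by `H`-paths. -/
def HKernel {α β : Type*} (H : α → α → Prop) (D : β → β → Prop) (c : β → β → α)
    (S : Set β) : Prop :=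
  HIndep H D c S ∧ HAbsorbent H D c S

/-- `S` is independent by `H`-walks. -/
def WIndep {α β : Type*} (H : α → α → Prop) (D : β → β → Prop) (c : β → β → α)
    (S : Set β) : Prop :=
  ∀ u ∈ S, ∀ v ∈ S, u ≠ v → ¬ HWalkReach H D c u v

/-- `S` is absorbent by `H`-walks. -/
def WAbsorbent {α β : Type*} (H : α → α → Prop) (D : β → β → Prop) (c : β → β → α)
    (S : Set β) : Prop :=
  ∀ u ∉ S, ∃ v ∈ S, HWalkReach H D c u v

/-- A kernel by `H`-walks. -/
def WKernel {α β : Type*} (H : α → α → Prop) (D : β → β → Prop) (c : β → β → α)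
    (S : Set β) : Prop :=
  WIndep H D c S ∧ WAbsorbent H D c S

/-- The complement of a pattern: `(u,v)` (with `u ≠ v`) is an arc iff it is not an arc of `H`. -/
def complRel {α : Type*} (H : α → α → Prop) : α → α → Prop :=
  fun u v => u ≠ v ∧ ¬ H u v

/-- `G` contains a directed cycle of odd length. -/
def HasOddDicycle {α : Type*} (G : α → α → Prop) : Prop :=
  ∃ (x : α) (l : List α), (x :: l).Nodup ∧ Odd (x :: l).length ∧ (x :: l).Chain' G ∧
    G ((x :: l).getLast (List.cons_ne_nil x l)) x

/-- The list of arcs (consecutive pairs) of a list of vertices. -/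
def arcsOf {β : Type*} (l : List β) : List (β × β) := l.zip l.tail


/-- The linear sum of two patterns: disjoint union plus all arcs from `V(H₁)` to `V(H₂)`. -/
def sumH {α₁ α₂ : Type} (H₁ : α₁ → α₁ → Prop) (H₂ : α₂ → α₂ → Prop) :
    α₁ ⊕ α₂ → α₁ ⊕ α₂ → Prop
  | .inl u, .inl v => H₁ u v
  | .inl _, .inr _ => True
  | .inr _, .inl _ => False
  | .inr u, .inr v => H₂ u v

open Function Set

section ColourList

variable {α α' β : Type*}

lemma colourList_append (c : β → β → α) (x : β) :
    ∀ l m : List β,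
      colourList c (l ++ x :: m) = colourList c (l ++ [x]) ++ colourList c (x :: m)
  | [], _ => rfl
  | [_], _ => rfl
  | a :: b :: l, m => congrArg (c a b :: ·) (colourList_append c x (b :: l) m)

lemma head?_colourList_cons (c : β → β → α) (x : β) (m : List β) :
    (colourList c (x :: m)).head? = m.head?.map (c x) := by
  cases m <;> rfl

lemma getLast?_colourList_append_singleton (c : β → β → α) (x : β) :
    ∀ l : List β, (colourList c (l ++ [x])).getLast? = l.getLast?.map (c · x)
  | [] => rfl
  | [_] => rfl
  | a :: b :: l => by
    rw [List.cons_append, List.cons_append, colourList, ← List.cons_append, List.getLast?_cons,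
      getLast?_colourList_append_singleton c x (b :: l)]
    simp [List.getLast?_eq_some_getLast]

lemma isChain_colourList_append {H : α → α → Prop} {c : β → β → α} {x : β} {l m : List β} :
    (colourList c (l ++ x :: m)).IsChain H ↔
      (colourList c (l ++ [x])).IsChain H ∧ (colourList c (x :: m)).IsChain H ∧
        ∀ y ∈ l.getLast?, ∀ z ∈ m.head?, H (c y x) (c x z) := by
  simp [colourList_append c x l m, List.isChain_append,
    getLast?_colourList_append_singleton, head?_colourList_cons]

lemma colourList_eq_map_of_isChain {D : β → β → Prop} {c : β → β → α} {c' : β → β → α'}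
    {g : α' → α} (hc : ∀ x y, D x y → c x y = g (c' x y)) :
    ∀ {l : List β}, l.IsChain D → colourList c l = (colourList c' l).map g
  | [], _ => rfl
  | [_], _ => rfl
  | a :: b :: t, h => by
    rw [List.isChain_cons_cons] at h
    rw [colourList, colourList, List.map_cons, hc a b h.1, colourList_eq_map_of_isChain hc h.2]

end ColourList

lemma List.exists_split_first_mem {β : Type*} {l m : List β} {v : β} (hl : v ∈ l) (hm : v ∈ m) :
    ∃ t x r, l = t ++ x :: r ∧ x ∈ m ∧ ∀ y ∈ t, y ∉ m := by
  classical
  obtain ⟨x, hx⟩ : ∃ x, l.find? (· ∈ m) = some x :=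
    Option.isSome_iff_exists.mp (List.find?_isSome.mpr ⟨v, hl, decide_eq_true hm⟩)
  obtain ⟨hxm, t, r, rfl, ht⟩ := List.find?_eq_some_iff_append.mp hx
  exact ⟨t, x, r, rfl, of_decide_eq_true hxm, fun y hy => by simpa using ht y hy⟩

section Paths

variable {α α' β : Type*} {H : α → α → Prop} {D D' : β → β → Prop} {c : β → β → α} {u v w : β}

lemma IsHWalk.forall_mem {S : Set β} (hS : ∀ x y, D x y → x ∈ S ∧ y ∈ S) {l : List β}
    (hl : IsHWalk H D c l) : ∀ x ∈ l, x ∈ S := by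
  obtain ⟨hlen, hD, -⟩ := hl
  refine List.IsChain.induction (· ∈ S) l hD (fun x y hxy _ => (hS x y hxy).2) fun _ => ?_
  match l, hlen, hD with
  | a :: b :: _, _, hD => exact (hS a b (List.isChain_cons_cons.mp hD).1).1

lemma HPathReach.target_mem {S : Set β} (hS : ∀ x y, D x y → x ∈ S ∧ y ∈ S)
    (h : HPathReach H D c u v) : v ∈ S := by
  obtain ⟨l, hl, -, hv⟩ := h
  exact hl.1.forall_mem hS v (List.mem_of_getLast? hv)

lemma HPathReach.mono (hD : ∀ x y, D x y → D' x y) (h : HPathReach H D c u v) :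
    HPathReach H D' c u v := by
  obtain ⟨l, ⟨⟨hlen, hl, hcol⟩, hnd⟩, hu, hv⟩ := h
  exact ⟨l, ⟨⟨hlen, hl.imp fun {x y} => hD x y, hcol⟩, hnd⟩, hu, hv⟩

lemma HPathReach.of_colour_hom {H' : α' → α' → Prop} {c' : β → β → α'} (g : α' → α)
    (hg : ∀ a b, H' a b → H (g a) (g b)) (hc : ∀ x y, D x y → c x y = g (c' x y))
    (h : HPathReach H' D c' u v) : HPathReach H D c u v := by
  obtain ⟨l, ⟨⟨hlen, hl, hcol⟩, hnd⟩, hu, hv⟩ := h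
  refine ⟨l, ⟨⟨hlen, hl, ?_⟩, hnd⟩, hu, hv⟩
  rw [colourList_eq_map_of_isChain hc hl]
  exact (List.isChain_map g).mpr (hcol.imp fun {a b} => hg a b)

lemma HPathReach.trans_of_junction {D₁ D₂ : β → β → Prop} {S : Set β}
    (hH : ∀ x y z, D₁ x y → D₂ y z → H (c x y) (c y z))
    (hS : ∀ x y, D₂ x y → x ∈ S ∧ y ∈ S) (hu : u ∉ S)
    (h₁ : HPathReach H D₁ c u v) (h₂ : HPathReach H D₂ c v w) :
    HPathReach H (fun x y => D₁ x y ∨ D₂ x y) c u w := by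
  obtain ⟨l₁, ⟨⟨-, hD₁, hc₁⟩, hnd₁⟩, hu₁, hv₁⟩ := h₁
  obtain ⟨l₂, ⟨hwalk₂, hnd₂⟩, hv₂, hw₂⟩ := h₂
  have hl₂S := hwalk₂.forall_mem hS
  obtain ⟨-, hD₂, hc₂⟩ := hwalk₂
  obtain ⟨t, x, r, rfl, hx, ht⟩ :=
    List.exists_split_first_mem (List.mem_of_getLast? hv₁) (List.mem_of_head? hv₂)
  obtain ⟨s, r₂, rfl⟩ := List.append_of_mem hx
  have ht₀ : t ≠ [] := by
    rintro rfl
    obtain rfl : x = u := by simpa using hu₁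
    exact hu (hl₂S x hx)
  have hD₁t := (List.isChain_split.mp hD₁).1
  have hD₂r := (List.isChain_split.mp hD₂).2
  refine ⟨t ++ x :: r₂, ⟨⟨?_, ?_, ?_⟩, ?_⟩, ?_, ?_⟩
  · have := List.length_pos_iff.mpr ht₀
    simp only [List.length_append, List.length_cons]
    omega
  · exact List.isChain_split.mpr ⟨hD₁t.imp fun {_ _} => Or.inl, hD₂r.imp fun {_ _} => Or.inr⟩
  · refine isChain_colourList_append.mpr
      ⟨(isChain_colourList_append.mp hc₁).1, (isChain_colourList_append.mp hc₂).2.1, ?_⟩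
    exact fun y hy z hz =>
      hH y x z ((List.isChain_append.mp hD₁t).2.2 y hy x rfl) (hD₂r.rel_head? hz)
  · refine List.nodup_append.mpr ⟨(List.nodup_append.mp hnd₁).1,
      (List.nodup_append.mp hnd₂).2.1, fun a ha b hb hab => ht a ha ?_⟩
    exact hab ▸ List.mem_append_right s hb
  · rwa [List.head?_append_of_ne_nil _ ht₀, ← List.head?_append_of_ne_nil _ ht₀]
  · rwa [List.getLast?_append_of_ne_nil _ (List.cons_ne_nil x r₂),
      ← List.getLast?_append_of_ne_nil s (List.cons_ne_nil x r₂)]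

end Paths

section Restrict

variable {α β : Type*}

def colourRestrict (D : β → β → Prop) (c : β → β → α) (P : Set α) : β → β → Prop :=
  fun x y => D x y ∧ c x y ∈ P

def induceOn (D : β → β → Prop) (S : Set β) : β → β → Prop :=
  fun x y => D x y ∧ x ∈ S ∧ y ∈ S

lemma Indep.inter_of_colourRestrict {D : β → β → Prop} {c : β → β → α} {P Q : Set α}
    {K₁ K₂ : Set β} (h₁ : Indep (colourRestrict D c P) K₁) (hPQ : ∀ a, a ∈ P ∨ a ∈ Q)
    (h₂ : Indep (colourRestrict (induceOn D K₁) c Q) K₂) : Indep D (K₂ ∩ K₁) := by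
  rintro x ⟨hx₂, hx₁⟩ y ⟨hy₂, hy₁⟩ hxy
  rcases hPQ (c x y) with hP | hQ
  · exact h₁ x hx₁ y hy₁ ⟨hxy, hP⟩
  · exact h₂ x hx₂ y hy₂ ⟨⟨hxy, hx₁, hy₁⟩, hQ⟩

end Restrict

lemma exists_indep_hAbsorbent_colourRestrict_range {α' α β : Type} {H' : α' → α' → Prop}
    {H : α → α → Prop} (g : α' → α) (hg : ∀ a b, H' a b → H (g a) (g b))
    (h' : ∀ (β : Type) (D : β → β → Prop), Loopless D → ∀ c : β → β → α',
      ∃ K : Set β, Indep D K ∧ HAbsorbent H' D c K)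
    {D : β → β → Prop} (hD : Loopless D) (c : β → β → α) :
    ∃ K : Set β, Indep (colourRestrict D c (range g)) K ∧
      HAbsorbent H (colourRestrict D c (range g)) c K := by
  rcases isEmpty_or_nonempty α' with hα' | hα'
  · refine ⟨univ, fun x _ y _ hxy => ?_, fun u hu => absurd (mem_univ u) hu⟩
    obtain ⟨a, -⟩ := hxy.2
    exact isEmptyElim a
  · -- `g ∘ invFun g` is the identity on `range g`, which holds every colour of a restricted arc
    obtain ⟨K, hKi, hKa⟩ := h' β (colourRestrict D c (range g)) (fun v hv => hD v hv.1)
      fun x y => invFun g (c x y)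
    refine ⟨K, hKi, fun u hu => ?_⟩
    obtain ⟨v, hv, huv⟩ := hKa u hu
    exact ⟨v, hv, huv.of_colour_hom g hg fun x y hxy => (invFun_eq hxy.2).symm⟩

theorem stmt4_general {α₁ α₂ : Type} (H₁ : α₁ → α₁ → Prop) (H₂ : α₂ → α₂ → Prop)
    (h₁ : ∀ (β : Type) (D : β → β → Prop), Loopless D → ∀ c : β → β → α₁,
      ∃ K : Set β, Indep D K ∧ HAbsorbent H₁ D c K)
    (h₂ : ∀ (β : Type) (D : β → β → Prop), Loopless D → ∀ c : β → β → α₂,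
      ∃ K : Set β, Indep D K ∧ HAbsorbent H₂ D c K) :
    ∀ (β : Type) (D : β → β → Prop), Loopless D → ∀ c : β → β → α₁ ⊕ α₂,
      ∃ K : Set β, Indep D K ∧ HAbsorbent (sumH H₁ H₂) D c K := by
  intro β D hD c
  obtain ⟨K₁, hK₁i, hK₁a⟩ := exists_indep_hAbsorbent_colourRestrict_range
    (H := sumH H₁ H₂) Sum.inl (fun _ _ h => h) h₁ hD c
  obtain ⟨K₂, hK₂i, hK₂a⟩ := exists_indep_hAbsorbent_colourRestrict_range
    (H := sumH H₁ H₂) Sum.inr (fun _ _ h => h) h₂ (D := induceOn D K₁) (fun v hv => hD v hv.1) c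
  have hK₁arc : ∀ x y, colourRestrict (induceOn D K₁) c (range Sum.inr) x y → x ∈ K₁ ∧ y ∈ K₁ :=
    fun _ _ h => h.1.2
  have habs₂ : ∀ v ∉ K₂, ∃ w ∈ K₂ ∩ K₁,
      HPathReach (sumH H₁ H₂) (colourRestrict (induceOn D K₁) c (range Sum.inr)) c v w := by
    intro v hv₂
    obtain ⟨w, hw, hvw⟩ := hK₂a v hv₂
    exact ⟨w, ⟨hw, hvw.target_mem hK₁arc⟩, hvw⟩
  refine ⟨K₂ ∩ K₁, hK₁i.inter_of_colourRestrict (fun a => ?_) hK₂i, fun u hu => ?_⟩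
  · rcases a with a | b
    exacts [Or.inl ⟨a, rfl⟩, Or.inr ⟨b, rfl⟩]
  by_cases hu₁ : u ∈ K₁
  · obtain ⟨w, hw, huw⟩ := habs₂ u fun h => hu ⟨h, hu₁⟩
    exact ⟨w, hw, huw.mono fun _ _ h => h.1.1⟩
  obtain ⟨v, hv₁, huv⟩ := hK₁a u hu₁
  by_cases hv₂ : v ∈ K₂
  · exact ⟨v, ⟨hv₂, hv₁⟩, huv.mono fun _ _ h => h.1⟩
  obtain ⟨w, hw, hvw⟩ := habs₂ v hv₂
  refine ⟨w, hw, (huv.trans_of_junction ?_ hK₁arc hu₁ hvw).mono ?_⟩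
  · rintro x y z ⟨-, a, ha⟩ ⟨-, b, hb⟩
    rw [← ha, ← hb]
    trivial
  · rintro x y (h | h)
    exacts [h.1, h.1.1]

/-- If every `H₁`-arc-coloured digraph has an independent `H₁`-absorbent set,
and likewise for `H₂` (both reflexive), then every `(H₁ • H₂)`-arc-coloured digraph has an
independent `(H₁ • H₂)`-absorbent set. -/
theorem stmt4 {α₁ α₂ : Type} (H₁ : α₁ → α₁ → Prop) (H₂ : α₂ → α₂ → Prop)
    (hr₁ : Reflexive H₁) (hr₂ : Reflexive H₂)
    (h₁ : ∀ (β : Type) (D : β → β → Prop), Loopless D → ∀ c : β → β → α₁,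
      ∃ K : Set β, Indep D K ∧ HAbsorbent H₁ D c K)
    (h₂ : ∀ (β : Type) (D : β → β → Prop), Loopless D → ∀ c : β → β → α₂,
      ∃ K : Set β, Indep D K ∧ HAbsorbent H₂ D c K) :
    ∀ (β : Type) (D : β → β → Prop), Loopless D → ∀ c : β → β → α₁ ⊕ α₂,
      ∃ K : Set β, Indep D K ∧ HAbsorbent (sumH H₁ H₂) D c K :=
  stmt4_general H₁ H₂ h₁ h₂
end

section
/- Let H be a reflexive pattern whose complement contains a directed odd cycle (0,1,…,2k,0). Then the H-arc-coloured digraph D consisting of a directed cycle (x₀,…,x_{2k},x₀) with arc (x_i, x_{i+1}) coloured i (indices mod 2k+1) has the property that every H-path in D is a single arc, and consequently D has no independent H-absorbent set. -/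
section

variable {α β : Type*} {H : α → α → Prop} {D : β → β → Prop} {c : β → β → α}

theorem IsHWalk.length_eq_two_of_forall_not_adj
    (hD : ∀ a b d, D a b → D b d → ¬ H (c a b) (c b d))
    {l : List β} (hl : IsHWalk H D c l) : l.length = 2 := by
  obtain ⟨hlen, hchain, hcol⟩ := hl
  match l, hlen, hchain, hcol with
  | [_, _], _, _, _ => rfl
  | a :: b :: d :: _, _, hchain, hcol =>
    exact (hD a b d (List.rel_of_isChain_cons_cons hchain)
      (List.rel_of_isChain_cons_cons hchain.tail) (List.rel_of_isChain_cons_cons hcol)).elim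

theorem HAbsorbent.exists_adj (hpaths : ∀ l, IsHPath H D c l → l.length = 2) {S : Set β}
    (hS : HAbsorbent H D c S) : ∀ u ∉ S, ∃ v ∈ S, D u v := by
  intro u hu
  obtain ⟨v, hv, l, hl, hhead, hlast⟩ := hS u hu
  match l, hpaths l hl with
  | [a, b], _ =>
    obtain rfl : a = u := by simpa using hhead
    obtain rfl : b = v := by simpa using hlast
    exact ⟨b, hv, List.rel_of_isChain_cons_cons hl.1.2.1⟩

end

open Fin.CommRing in
theorem Fin.not_exists_kernel_of_odd {n : ℕ} [NeZero n] (hn : Odd n) :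
    ¬ ∃ S : Set (Fin n), Indep (fun i j : Fin n => j = i + 1) S ∧ ∀ u ∉ S, ∃ v ∈ S, v = u + 1 := by
  rintro ⟨S, hindep, habs⟩
  have halt : ∀ i : Fin n, i ∈ S ↔ i + 1 ∉ S := fun i =>
    ⟨fun hi hi1 => hindep i hi _ hi1 rfl, fun hi1 => by_contra fun hi => by
      obtain ⟨_, hv, rfl⟩ := habs i hi
      exact hi1 hv⟩
  have hparity : ∀ m : ℕ, (m : Fin n) ∈ S ↔ (0 ∈ S ↔ Even m) := by
    intro m
    induction m with
    | zero => simp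
    | succ m ih =>
      rw [Nat.cast_succ, Nat.even_add_one]
      have := halt m
      tauto
  have := hparity n
  rw [Fin.natCast_self, iff_false_intro (Nat.not_even_iff_odd.mpr hn)] at this
  tauto

theorem stmt5_general {α : Type} (H : α → α → Prop) (k : ℕ)
    (f : Fin (2 * k + 1) → α)
    (hcyc : ∀ i : Fin (2 * k + 1), ¬ H (f i) (f (i + 1))) :
    (∀ l, IsHPath H (fun i j : Fin (2 * k + 1) => j = i + 1) (fun i _ => f i) l →
        l.length = 2) ∧
      ¬ ∃ S, Indep (fun i j : Fin (2 * k + 1) => j = i + 1) S ∧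
          HAbsorbent H (fun i j : Fin (2 * k + 1) => j = i + 1) (fun i _ => f i) S := by
  have hpaths : ∀ l, IsHPath H (fun i j : Fin (2 * k + 1) => j = i + 1) (fun i _ => f i) l →
      l.length = 2 := fun l hl =>
    hl.1.length_eq_two_of_forall_not_adj (by rintro a _ _ rfl rfl; exact hcyc a)
  refine ⟨hpaths, ?_⟩
  rintro ⟨S, hindep, habs⟩
  exact Fin.not_exists_kernel_of_odd (odd_two_mul_add_one k) ⟨S, hindep, habs.exists_adj hpaths⟩

/-- If the complement of the reflexive pattern `H` contains a directed odd
cycle `(f 0, f 1, …, f 2k, f 0)`, then in the directed `(2k+1)`-cycle with arc `(i, i+1)`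
coloured `f i`, every `H`-path is a single arc, and there is no independent `H`-absorbent
set. -/
theorem stmt5 {α : Type} (H : α → α → Prop) (hrefl : Reflexive H) (k : ℕ) (hk : 1 ≤ k)
    (f : Fin (2 * k + 1) → α) (hf : Function.Injective f)
    (hcyc : ∀ i : Fin (2 * k + 1), ¬ H (f i) (f (i + 1))) :
    (∀ l, IsHPath H (fun i j : Fin (2 * k + 1) => j = i + 1) (fun i _ => f i) l →
        l.length = 2) ∧
      ¬ ∃ S, Indep (fun i j : Fin (2 * k + 1) => j = i + 1) S ∧
          HAbsorbent H (fun i j : Fin (2 * k + 1) => j = i + 1) (fun i _ => f i) S :=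
  stmt5_general H k f hcyc
end

section
/- A reflexive digraph H is transitive (i.e., (a,b) ∈ A(H) and (b,c) ∈ A(H) imply (a,c) ∈ A(H)) if and only if for every H-arc-coloured digraph D and every pair of distinct vertices x, y of D, every H-walk from x to y in D contains an H-path from x to y. -/
/-!
If `H` is transitive, the colour sequence of an `H`-walk is pairwise `H`-related, so shortcutting
its closed subwalks, which keeps a subsequence of its arcs, leaves an `H`-path. Conversely, given
`H a b` and `H b c`, colour the walk `0 → 1 → 2 → 1 → 3` by `a, b, b, c`; it is an `H`-walk
because `H b b`, and its only path from `0` to `3` is `0 → 1 → 3`, coloured `a, c`. So `H a c`.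
-/

section

variable {α β : Type*}

@[simp]
lemma arcsOf_cons_cons (a b : β) (t : List β) :
    arcsOf (a :: b :: t) = (a, b) :: arcsOf (b :: t) := rfl

lemma isChain_iff_forall_mem_arcsOf {R : β → β → Prop} :
    ∀ {l : List β}, l.IsChain R ↔ ∀ e ∈ arcsOf l, R e.1 e.2
  | [] | [_] => by simp [arcsOf]
  | a :: b :: t => by
    simp [List.isChain_cons_cons, isChain_iff_forall_mem_arcsOf (l := b :: t)]

lemma colourList_eq_map_arcsOf (c : β → β → α) :
    ∀ l : List β, colourList c l = (arcsOf l).map (fun e => c e.1 e.2)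
  | [] | [_] => rfl
  | a :: b :: t => by simp [colourList, colourList_eq_map_arcsOf c (b :: t)]

lemma arcsOf_sublist_cons (a : β) : ∀ l : List β, (arcsOf l).Sublist (arcsOf (a :: l))
  | [] => by simp [arcsOf]
  | b :: t => by simp

lemma arcsOf_sublist_append_left : ∀ (l₁ l₂ : List β), (arcsOf l₂).Sublist (arcsOf (l₁ ++ l₂))
  | [], _ => List.Sublist.refl _
  | a :: l₁, l₂ => (arcsOf_sublist_append_left l₁ l₂).trans (arcsOf_sublist_cons a _)

/-- If the first vertex recurs on the path extracted from the tail, cut that path back to it. -/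
lemma exists_nodup_arcsOf_sublist :
    ∀ l : List β, l ≠ [] → ∃ p : List β, p.Nodup ∧ p.head? = l.head? ∧
      p.getLast? = l.getLast? ∧ (arcsOf p).Sublist (arcsOf l)
  | [a], _ => ⟨[a], List.nodup_singleton a, rfl, rfl, List.Sublist.refl _⟩
  | a :: b :: t, _ => by
    obtain ⟨p, hnd, hhead, hlast, hsub⟩ := exists_nodup_arcsOf_sublist (b :: t) (by simp)
    have hsub' : (arcsOf p).Sublist (arcsOf (a :: b :: t)) := hsub.trans (arcsOf_sublist_cons a _)
    by_cases ha : a ∈ p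
    · obtain ⟨p₁, p₂, rfl⟩ := List.append_of_mem ha
      refine ⟨a :: p₂, hnd.sublist (List.sublist_append_right _ _), rfl, ?_,
        (arcsOf_sublist_append_left p₁ _).trans hsub'⟩
      rw [List.getLast?_cons_cons, ← hlast, List.getLast?_append_cons]
    · obtain _ | ⟨b', p'⟩ := p
      · simp at hhead
      obtain rfl : b = b' := by simpa [eq_comm] using hhead
      refine ⟨a :: b :: p', hnd.cons ha, rfl, ?_, ?_⟩
      · simpa [List.getLast?_cons_cons] using hlast
      · simpa using hsub

lemma two_le_length_of_head?_of_getLast? {x y : β} (hxy : x ≠ y) :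
    ∀ {p : List β}, p.head? = some x → p.getLast? = some y → 2 ≤ p.length
  | [], hx, _ => by simp at hx
  | [_], hx, hy => by simp_all
  | _ :: _ :: _, _, _ => by simp

variable {H : α → α → Prop} {D : β → β → Prop} {c : β → β → α}

/-- Transitivity makes the colour sequence pairwise `H`-related, so every subsequence of it is
again coloured like an `H`-walk. -/
lemma IsHWalk.of_arcsOf_sublist [IsTrans α H] {l p : List β} (hl : IsHWalk H D c l)
    (hp : 2 ≤ p.length) (hsub : (arcsOf p).Sublist (arcsOf l)) : IsHWalk H D c p := by
  obtain ⟨-, hD, hH⟩ := hl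
  refine ⟨hp, ?_, ?_⟩
  · exact isChain_iff_forall_mem_arcsOf.2 fun e he =>
      isChain_iff_forall_mem_arcsOf.1 hD e (hsub.subset he)
  · have hH : ((arcsOf l).map fun e => c e.1 e.2).Pairwise H := by
      rw [← colourList_eq_map_arcsOf]; exact List.isChain_iff_pairwise.1 hH
    show List.IsChain H _
    rw [colourList_eq_map_arcsOf]
    exact (hH.sublist (hsub.map _)).isChain

lemma IsHWalk.exists_isHPath [IsTrans α H] {l : List β} (hl : IsHWalk H D c l)
    {x y : β} (hxy : x ≠ y) (hx : l.head? = some x) (hy : l.getLast? = some y) :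
    ∃ p, IsHPath H D c p ∧ p.head? = some x ∧ p.getLast? = some y ∧
      ∀ e ∈ arcsOf p, e ∈ arcsOf l := by
  obtain ⟨p, hnd, hpx, hpy, hsub⟩ := exists_nodup_arcsOf_sublist l (by rintro rfl; simp at hx)
  rw [hx] at hpx
  rw [hy] at hpy
  exact ⟨p, ⟨hl.of_arcsOf_sublist (two_le_length_of_head?_of_getLast? hxy hpx hpy) hsub,
    hnd⟩, hpx, hpy, fun e he => hsub.subset he⟩

end

def detour : List (Fin 4) := [0, 1, 2, 1, 3]

lemma eq_of_arcsOf_subset_detour {p : List (Fin 4)} (hnd : p.Nodup) (hx : p.head? = some 0)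
    (hy : p.getLast? = some 3) (harcs : ∀ e ∈ arcsOf p, e ∈ arcsOf detour) : p = [0, 1, 3] := by
  rcases p with _ | ⟨p₀, _ | ⟨p₁, _ | ⟨p₂, _ | ⟨p₃, r⟩⟩⟩⟩
  · simp at hx
  · simp_all
  all_goals
    simp only [List.head?_cons, Option.some.injEq] at hx
    subst hx
    simp only [arcsOf_cons_cons, List.mem_cons, forall_eq_or_imp] at harcs
  · simp only [List.getLast?_cons_cons, List.getLast?_singleton, Option.some.injEq] at hy
    subst hy
    exact absurd harcs.1 (by decide)
  · simp only [List.getLast?_cons_cons, List.getLast?_singleton, Option.some.injEq] at hy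
    subst hy
    obtain ⟨h₁, -⟩ := harcs
    clear hnd
    revert p₁
    decide
  · have hnd' : [0, p₁, p₂, p₃].Nodup := hnd.sublist (List.prefix_append _ r).sublist
    obtain ⟨h₁, h₂, h₃, -⟩ := harcs
    clear hnd hy
    exfalso
    revert p₁ p₂ p₃
    decide

def detourColouring {α : Type*} (a b c : α) (u v : Fin 4) : α :=
  if u = 0 then a else if v = 3 then c else b

lemma loopless_mem_arcsOf_detour : Loopless fun u v => (u, v) ∈ arcsOf detour := by
  unfold Loopless
  decide

lemma isHWalk_detour {α : Type*} {H : α → α → Prop} {a b c : α}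
    (hab : H a b) (hbb : H b b) (hbc : H b c) :
    IsHWalk H (fun u v => (u, v) ∈ arcsOf detour) (detourColouring a b c) detour := by
  refine ⟨by decide, isChain_iff_forall_mem_arcsOf.2 fun _ => id, ?_⟩
  show List.IsChain H [a, b, b, c]
  simp [hab, hbb, hbc]

/-- A reflexive digraph `H` is transitive iff for every `H`-arc-coloured
digraph `D` and distinct vertices `x, y`, every `H`-walk from `x` to `y` contains an
`H`-path from `x` to `y` (using only arcs of the walk). -/
theorem stmt8 {α : Type} (H : α → α → Prop) (hrefl : Reflexive H) :
    Transitive H ↔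
      ∀ (β : Type) (D : β → β → Prop), Loopless D → ∀ c : β → β → α,
        ∀ x y : β, x ≠ y →
          ∀ l, IsHWalk H D c l → l.head? = some x → l.getLast? = some y →
            ∃ p, IsHPath H D c p ∧ p.head? = some x ∧ p.getLast? = some y ∧
              ∀ e ∈ arcsOf p, e ∈ arcsOf l := by
  refine ⟨fun htrans β D _ c x y hxy l hl hx hy => ?_, ?_⟩
  · have : IsTrans α H := ⟨fun _ _ _ => @htrans _ _ _⟩
    exact hl.exists_isHPath hxy hx hy
  · intro h a b c hab hbc
    obtain ⟨p, ⟨⟨-, -, hH⟩, hnd⟩, hx, hy, harcs⟩ :=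
      h (Fin 4) _ loopless_mem_arcsOf_detour (detourColouring a b c) 0 3 (by decide) detour
        (isHWalk_detour hab (hrefl b) hbc) rfl rfl
    rw [eq_of_arcsOf_subset_detour hnd hx hy harcs] at hH
    exact List.isChain_pair.1 hH
end

section
/- Let H be a pattern containing a directed walk W = (x₀, x₁, …, x_k) such that (i) for each 0 ≤ j ≤ k−1 there exists a colour c_j ∈ V(H) with (x_j, c_j) ∉ A(H), and (ii) (x_k, x₀) ∉ A(H). Then there exists an H-arc-coloured digraph with no H-kernel; that is, H is not a panchromatic pattern by paths. -/
/-!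
Lay three copies of `w` around a directed cycle of length `3 |w|`, the arc leaving `a` coloured
by `w[a mod |w|]`, and at every vertex that does not start a copy attach a pendant sink, entered
by a colour which the colour of the preceding cycle arc does not dominate in `H`. Sinks lie in
every `H`-kernel, so the vertices inside a copy do not. An `H`-walk from the start of a copy can
take no pendant arc and cannot run past the end of the copy, since the last vertex of `w` does not
dominate the first; so it ends inside the copy or at the next start. Hence exactly one of any two
consecutive starts lies in an `H`-kernel, which is impossible for three starts around a cycle.
-/

open List

section ColourList

variable {α β : Type*}

lemma colourList_append_singleton (c : β → β → α) {l : List β} (hl : l ≠ []) (x : β) :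
    colourList c (l ++ [x]) = colourList c l ++ [c (l.getLast hl) x] :=
  match l, hl with
  | [_], _ => rfl
  | a :: b :: t, _ => by
    simp only [cons_append, colourList, getLast_cons_cons]
    rw [← cons_append, colourList_append_singleton c (cons_ne_nil b t)]

lemma colourList_map_range (c : β → β → α) (f : ℕ → β) (m : ℕ) :
    colourList c ((range (m + 1)).map f) = (range m).map (fun i => c (f i) (f (i + 1))) := by
  induction m with
  | zero => rfl
  | succ m ih =>
    rw [range_succ, map_append, map_singleton, colourList_append_singleton c (by simp), ih]
    simp [range_succ]

lemma isChain_map_range_succ (R : α → α → Prop) (g : ℕ → α) (m : ℕ) :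
    ((range (m + 1)).map g).IsChain R ↔ ∀ i < m, R (g i) (g (i + 1)) := by
  rw [isChain_map, isChain_range_succ]

end ColourList

section HKernel

variable {α β : Type*} {H : α → α → Prop} {D : β → β → Prop} {c : β → β → α} {K : Set β}

lemma hPathReach_of_adj {u v : β} (huv : D u v) (hne : u ≠ v) : HPathReach H D c u v :=
  ⟨[u, v], ⟨⟨le_rfl, isChain_pair.mpr huv, isChain_singleton _⟩, by simpa using hne⟩,
    rfl, rfl⟩

lemma HAbsorbent.mem_of_forall_not_adj (hK : HAbsorbent H D c K) {u : β}
    (hu : ∀ v, ¬ D u v) : u ∈ K := by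
  by_contra huK
  obtain ⟨-, -, l, ⟨⟨hlen, hD, -⟩, -⟩, hhead, -⟩ := hK u huK
  match l, hlen, hD, hhead with
  | _ :: v :: _, _, hD, rfl => exact hu v (isChain_cons_cons.mp hD).1

lemma HIndep.notMem_of_adj (hK : HIndep H D c K) {u v : β} (huv : D u v) (hne : u ≠ v)
    (hv : v ∈ K) : u ∉ K :=
  fun hu => hK u hu v hv hne (hPathReach_of_adj huv hne)

end HKernel

section PendantCycle

variable {α : Type}

noncomputable def nonOutNeighbour (H : α → α → Prop) (a : α) : α :=
  open Classical in if h : ∃ d, ¬ H a d then h.choose else a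

lemma not_rel_nonOutNeighbour {H : α → α → Prop} {a : α} (h : ∃ d, ¬ H a d) :
    ¬ H a (nonOutNeighbour H a) := by
  rw [nonOutNeighbour, dif_pos h]
  exact h.choose_spec

abbrev PendantCycle (n : ℕ) := ZMod (3 * n) ⊕ ZMod (3 * n)

/-- `inl a` is the vertex `a` of the cycle and `inr a` the sink attached to it; `a.val % n` is the
position of `a` in its copy of the walk. -/
def pendantCycleAdj (n : ℕ) : PendantCycle n → PendantCycle n → Prop
  | .inl a, .inl b => b = a + 1
  | .inl a, .inr b => b = a ∧ a.val % n ≠ 0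
  | .inr _, _ => False

/-- The default `x₀` never colours an arc: the indices are `< w.length`, and the truncated `0 - 1`
arises only at the starts of the copies, which carry no pendant arc. -/
noncomputable def pendantCycleColouring (H : α → α → Prop) (w : List α) (x₀ : α) :
    PendantCycle w.length → PendantCycle w.length → α
  | .inl a, .inl _ => w.getD (a.val % w.length) x₀
  | .inl a, .inr _ => nonOutNeighbour H (w.getD (a.val % w.length - 1) x₀)
  | .inr _, _ => x₀

def cyclePath {n : ℕ} (a : ZMod (3 * n)) (t : ℕ) : List (PendantCycle n) :=
  (range (t + 1)).map fun i : ℕ => .inl (a + i)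

lemma cyclePath_ne_nil {n : ℕ} (a : ZMod (3 * n)) (t : ℕ) : cyclePath a t ≠ [] := by
  simp [cyclePath]

lemma cyclePath_zero {n : ℕ} (a : ZMod (3 * n)) : cyclePath a 0 = [.inl a] := by
  simp [cyclePath]

lemma cyclePath_succ {n : ℕ} (a : ZMod (3 * n)) (t : ℕ) :
    cyclePath a (t + 1) = .inl a :: cyclePath (a + 1) t := by
  rw [cyclePath, range_succ_eq_map, map_cons, map_map, cyclePath]
  congr 1
  · simp
  · refine map_congr_left fun i _ => ?_
    simp only [Function.comp_apply, Nat.cast_succ]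
    ring_nf

lemma eq_cyclePath_of_isChain {n : ℕ} :
    ∀ {l : List (PendantCycle n)} {a : ZMod (3 * n)}, l.IsChain (pendantCycleAdj n) →
      l.head? = some (.inl a) →
      ∃ t, l = cyclePath a t ∨ (l = cyclePath a t ++ [.inr (a + t)] ∧ (a + t).val % n ≠ 0)
  | [_], a, _, rfl => ⟨0, .inl (cyclePath_zero a).symm⟩
  | .inl _ :: .inl b :: l, a, h, rfl => by
    obtain ⟨hb, h⟩ := isChain_cons_cons.mp h
    obtain ⟨t, ht⟩ := eq_cyclePath_of_isChain h rfl
    refine ⟨t + 1, ?_⟩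
    rw [cyclePath_succ, ← hb, show a + ((t + 1 : ℕ) : ZMod (3 * n)) = b + t by
      rw [hb]; push_cast; ring]
    rcases ht with ht | ⟨ht, hpos⟩
    · exact .inl (by rw [ht])
    · exact .inr ⟨by rw [ht, cons_append], hpos⟩
  | [.inl _, .inr b], a, h, rfl => by
    obtain ⟨rfl, hpos⟩ := isChain_pair.mp h
    exact ⟨0, .inr ⟨by simp [cyclePath_zero], by simpa using hpos⟩⟩
  | .inl _ :: .inr _ :: _ :: _, _, h, rfl =>
    (isChain_cons_cons.mp (isChain_cons_cons.mp h).2).1.elim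

end PendantCycle

section PendantCycleWalks

variable {α : Type} {H : α → α → Prop} {w : List α} {x₀ : α}

lemma natCast_val_mod {n : ℕ} [NeZero n] {a : ZMod (3 * n)} (ha : a.val % n = 0) (t : ℕ) :
    (a + t).val % n = t % n := by
  have hdvd : n ∣ 3 * n := dvd_mul_left n 3
  rw [ZMod.val_add, ZMod.val_natCast, Nat.mod_mod_of_dvd _ hdvd, Nat.add_mod, ha,
    Nat.mod_mod_of_dvd _ hdvd, zero_add, Nat.mod_mod]

lemma getLast_cyclePath {n : ℕ} (a : ZMod (3 * n)) (t : ℕ) :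
    (cyclePath a t).getLast (cyclePath_ne_nil a t) = .inl (a + t) := by
  simp [cyclePath, getLast_map, getLast_range]

lemma colourList_cyclePath [NeZero w.length] {a : ZMod (3 * w.length)}
    (ha : a.val % w.length = 0) (t : ℕ) :
    colourList (pendantCycleColouring H w x₀) (cyclePath a t) =
      (range t).map fun i => w.getD (i % w.length) x₀ := by
  rw [cyclePath, colourList_map_range]
  exact map_congr_left fun i _ => congrArg (w.getD · x₀) (natCast_val_mod ha i)

lemma le_length_of_isChain_getD_mod (hne : w ≠ []) (hii : ¬ H (w.getLast hne) (w.head hne))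
    {t : ℕ} (h : ((range t).map fun i => w.getD (i % w.length) x₀).IsChain H) :
    t ≤ w.length := by
  by_contra! ht
  obtain ⟨s, rfl⟩ : ∃ s, t = s + 1 := ⟨t - 1, by omega⟩
  have hn : 0 < w.length := length_pos_iff.mpr hne
  have hwrap := (isChain_map_range_succ H _ s).mp h (w.length - 1) (by omega)
  rw [Nat.sub_add_cancel hn, Nat.mod_self, Nat.mod_eq_of_lt (by omega),
    getD_eq_getElem _ _ (by omega), getD_eq_getElem _ _ hn] at hwrap
  rw [getLast_eq_getElem, head_eq_getElem_zero] at hii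
  exact hii hwrap

lemma not_isChain_colourList_pendant [NeZero w.length] (hne : w ≠ [])
    (hi : ∀ a ∈ w.dropLast, ∃ d, ¬ H a d) (hii : ¬ H (w.getLast hne) (w.head hne))
    {a : ZMod (3 * w.length)} (ha : a.val % w.length = 0) {t : ℕ}
    (hpos : (a + t).val % w.length ≠ 0) :
    ¬ (colourList (pendantCycleColouring H w x₀)
      (cyclePath a t ++ [.inr (a + t)])).IsChain H := by
  rw [colourList_append_singleton _ (cyclePath_ne_nil a t), getLast_cyclePath,
    colourList_cyclePath ha, isChain_append]
  rintro ⟨hcycle, -, hjoin⟩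
  have hle := le_length_of_isChain_getD_mod hne hii hcycle
  rw [natCast_val_mod ha] at hpos
  have hlt : t < w.length := lt_of_le_of_ne hle fun h => hpos (by rw [h, Nat.mod_self])
  obtain ⟨s, rfl⟩ := Nat.exists_eq_succ_of_ne_zero (n := t) fun h =>
    hpos (by rw [h, Nat.zero_mod])
  have hval : (a + ((s + 1 : ℕ) : ZMod (3 * w.length))).val % w.length = s + 1 := by
    rw [natCast_val_mod ha, Nat.mod_eq_of_lt hlt]
  push_cast at hval
  have hs : s < w.dropLast.length := by rw [length_dropLast]; omega
  have hturn := hi _ (getElem_mem hs)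
  rw [getElem_dropLast] at hturn
  refine not_rel_nonOutNeighbour hturn ?_
  have hsw : s < w.length := by omega
  simpa [range_succ, pendantCycleColouring, hval, Nat.mod_eq_of_lt hsw,
    getElem?_eq_getElem hsw] using hjoin

lemma isChain_cyclePath {n : ℕ} (a : ZMod (3 * n)) (t : ℕ) :
    (cyclePath a t).IsChain (pendantCycleAdj n) := by
  rw [cyclePath, isChain_map_range_succ]
  intro i _
  change a + ((i + 1 : ℕ) : ZMod (3 * n)) = a + i + 1
  push_cast
  ring

lemma getLast?_cyclePath {n : ℕ} (a : ZMod (3 * n)) (t : ℕ) :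
    (cyclePath a t).getLast? = some (.inl (a + t)) := by
  rw [getLast?_eq_getLast (cyclePath_ne_nil a t), getLast_cyclePath]

lemma exists_getLast?_eq_of_isHWalk [NeZero w.length] (hne : w ≠ [])
    (hi : ∀ a ∈ w.dropLast, ∃ d, ¬ H a d) (hii : ¬ H (w.getLast hne) (w.head hne))
    {a : ZMod (3 * w.length)} (ha : a.val % w.length = 0) {l : List (PendantCycle w.length)}
    (hl : IsHWalk H (pendantCycleAdj w.length) (pendantCycleColouring H w x₀) l)
    (hh : l.head? = some (.inl a)) :
    ∃ t, 1 ≤ t ∧ t ≤ w.length ∧ l.getLast? = some (.inl (a + t)) := by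
  obtain ⟨hlen, hD, hc⟩ := hl
  obtain ⟨t, rfl | ⟨rfl, hpos⟩⟩ := eq_cyclePath_of_isChain hD hh
  · refine ⟨t, ?_, ?_, getLast?_cyclePath a t⟩
    · simp only [cyclePath, length_map, length_range] at hlen
      omega
    · rw [colourList_cyclePath ha] at hc
      exact le_length_of_isChain_getD_mod hne hii hc
  · exact (not_isChain_colourList_pendant hne hi hii ha hpos hc).elim

lemma map_range_getD_mod_length (w : List α) (x₀ : α) :
    (range w.length).map (fun i => w.getD (i % w.length) x₀) = w :=
  ext_getElem (by simp) fun i h _ => by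
    rw [length_map, length_range] at h
    simp [Nat.mod_eq_of_lt h, getElem?_eq_getElem h]

lemma hPathReach_add_length [NeZero w.length] (hwalk : w.IsChain H)
    {a : ZMod (3 * w.length)} (ha : a.val % w.length = 0) :
    HPathReach H (pendantCycleAdj w.length) (pendantCycleColouring H w x₀) (.inl a)
      (.inl (a + w.length)) := by
  have hn : 0 < w.length := NeZero.pos _
  refine ⟨cyclePath a w.length, ⟨⟨?_, isChain_cyclePath a _, ?_⟩, ?_⟩, ?_,
    getLast?_cyclePath a _⟩
  · rw [cyclePath, length_map, length_range]
    omega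
  · rwa [colourList_cyclePath ha, map_range_getD_mod_length]
  · refine nodup_range.map_on fun i hi j hj hij => ?_
    have hval := congrArg ZMod.val (add_left_cancel (Sum.inl.inj hij))
    rw [mem_range] at hi hj
    rwa [ZMod.val_natCast, ZMod.val_natCast, Nat.mod_eq_of_lt (by omega),
      Nat.mod_eq_of_lt (by omega)] at hval
  · simp [cyclePath, range_succ_eq_map]

end PendantCycleWalks

section PendantCycleKernel

variable {α : Type} {H : α → α → Prop} {w : List α} {x₀ : α} {K : Set (PendantCycle w.length)}

lemma loopless_pendantCycleAdj (n : ℕ) [NeZero n] : Loopless (pendantCycleAdj n) := by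
  have : Fact (1 < 3 * n) := ⟨by have := NeZero.pos n; omega⟩
  rintro (a | a) h
  · exact one_ne_zero (left_eq_add.mp h)
  · exact h

lemma inr_mem_of_hKernel
    (hK : HKernel H (pendantCycleAdj w.length) (pendantCycleColouring H w x₀) K)
    (b : ZMod (3 * w.length)) : .inr b ∈ K :=
  hK.2.mem_of_forall_not_adj fun _ h => h

lemma inl_notMem_of_hKernel
    (hK : HKernel H (pendantCycleAdj w.length) (pendantCycleColouring H w x₀) K)
    {b : ZMod (3 * w.length)} (hb : b.val % w.length ≠ 0) : .inl b ∉ K :=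
  hK.1.notMem_of_adj (v := .inr b) ⟨rfl, hb⟩ Sum.inl_ne_inr (inr_mem_of_hKernel hK b)

lemma inl_add_length_mem_iff_of_hKernel [NeZero w.length] (hne : w ≠ [])
    (hwalk : w.IsChain H) (hi : ∀ a ∈ w.dropLast, ∃ d, ¬ H a d)
    (hii : ¬ H (w.getLast hne) (w.head hne))
    (hK : HKernel H (pendantCycleAdj w.length) (pendantCycleColouring H w x₀) K)
    {a : ZMod (3 * w.length)} (ha : a.val % w.length = 0) :
    .inl (a + w.length) ∈ K ↔ .inl a ∉ K := by
  constructor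
  · intro hnext hstart
    have hn : 0 < w.length := NeZero.pos _
    refine hK.1 _ hstart _ hnext (fun h => ?_) (hPathReach_add_length hwalk ha)
    have h3n := (ZMod.natCast_eq_zero_iff _ _).mp (left_eq_add.mp (Sum.inl.inj h))
    exact absurd (Nat.le_of_dvd hn h3n) (by omega)
  · intro hstart
    obtain ⟨v, hv, l, ⟨hl, -⟩, hh, hlast⟩ := hK.2 _ hstart
    obtain ⟨t, ht₁, ht, hl⟩ := exists_getLast?_eq_of_isHWalk hne hi hii ha hl hh
    obtain rfl := Option.some_inj.mp (hlast.symm.trans hl)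
    have hpos : t % w.length = 0 := by
      by_contra h
      exact inl_notMem_of_hKernel hK (by rwa [natCast_val_mod ha]) hv
    obtain rfl : t = w.length :=
      le_antisymm ht (Nat.le_of_dvd (by omega) (Nat.dvd_of_mod_eq_zero hpos))
    exact hv

end PendantCycleKernel

/-- If `H` contains a directed walk `w` such that every vertex of `w` except
the last has a non-out-neighbour in `H`, and the last vertex of `w` does not dominate the
first, then some `H`-arc-coloured digraph has no `H`-kernel. -/
theorem stmt11 {α : Type} (H : α → α → Prop) (w : List α) (hne : w ≠ [])
    (hwalk : w.Chain' H)
    (hi : ∀ a ∈ w.dropLast, ∃ d, ¬ H a d)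
    (hii : ¬ H (w.getLast hne) (w.head hne)) :
    ∃ (β : Type) (D : β → β → Prop) (c : β → β → α),
      Loopless D ∧ ¬ ∃ K, HKernel H D c K := by
  have : NeZero w.length := ⟨(length_pos_iff.mpr hne).ne'⟩
  refine ⟨PendantCycle w.length, pendantCycleAdj w.length,
    pendantCycleColouring H w (w.head hne), loopless_pendantCycleAdj _, ?_⟩
  rintro ⟨K, hK⟩
  let block (k : ℕ) : ZMod (3 * w.length) := (k * w.length : ℕ)
  have hstep (k : ℕ) : .inl (block (k + 1)) ∈ K ↔ .inl (block k) ∉ K := by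
    have hblock : block (k + 1) = block k + w.length := by simp [block, add_mul]
    rw [hblock]
    refine inl_add_length_mem_iff_of_hKernel hne hwalk hi hii hK ?_
    rw [ZMod.val_natCast, Nat.mod_mod_of_dvd _ (dvd_mul_left _ 3), Nat.mul_mod_left]
  have hwrap : block 3 = block 0 := by
    change ((3 * w.length : ℕ) : ZMod (3 * w.length)) = ((0 * w.length : ℕ) : ZMod _)
    rw [ZMod.natCast_self, zero_mul, Nat.cast_zero]
  have h₀ := hstep 0
  have h₁ := hstep 1
  have h₂ := hstep 2
  rw [hwrap] at h₂
  tauto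
end

section
/- Let H be a reflexive pattern and let x, y be true twins in H (distinct vertices with N⁺(x) = N⁺(y) and N⁻(x) = N⁻(y)). Then every H-arc-coloured digraph has an H-kernel if and only if every H_{xy}-arc-coloured digraph has an H_{xy}-kernel, where H_{xy} is the pattern obtained from H by identifying x and y (deleting parallel arcs). -/
/-! If a map `f` between patterns satisfies `H a b ↔ H' (f a) (f b)`, then composing an
`H`-colouring with `f` changes neither the `H`-paths nor, therefore, the `H`-kernels; so if every
`H'`-coloured digraph has an `H'`-kernel, so does every `H`-coloured one. The inclusion of `H - y`
into `H` is such a map, and so is the retraction of `H` onto `H - y` sending `y` to its twin `x`. -/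

section PatternPullback

variable {α γ β : Type*} {H : α → α → Prop} {H' : γ → γ → Prop} {f : α → γ}

lemma colourList_map (c : β → β → α) :
    ∀ l, colourList (fun u v => f (c u v)) l = (colourList c l).map f
  | [] | [_] => rfl
  | a :: b :: t => by simp [colourList, colourList_map c (b :: t)]

variable (D : β → β → Prop) (c : β → β → α)

lemma isHPath_comp_iff (hf : ∀ a b, H a b ↔ H' (f a) (f b)) (l : List β) :
    IsHPath H' D (fun u v => f (c u v)) l ↔ IsHPath H D c l := by
  simp only [IsHPath, IsHWalk, colourList_map, List.Chain', List.isChain_map, ← hf]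

lemma hPathReach_comp_iff (hf : ∀ a b, H a b ↔ H' (f a) (f b)) (u v : β) :
    HPathReach H' D (fun u v => f (c u v)) u v ↔ HPathReach H D c u v := by
  simp only [HPathReach, isHPath_comp_iff D c hf]

lemma hKernel_comp_iff (hf : ∀ a b, H a b ↔ H' (f a) (f b)) (K : Set β) :
    HKernel H' D (fun u v => f (c u v)) K ↔ HKernel H D c K := by
  simp only [HKernel, HIndep, HAbsorbent, hPathReach_comp_iff D c hf]

end PatternPullback

lemma forall_exists_hKernel_of_rel_iff {α γ : Type*} {H : α → α → Prop} {H' : γ → γ → Prop}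
    (f : α → γ) (hf : ∀ a b, H a b ↔ H' (f a) (f b))
    (h' : ∀ (β : Type) (D : β → β → Prop), Loopless D → ∀ c : β → β → γ, ∃ K, HKernel H' D c K)
    (β : Type) (D : β → β → Prop) (hD : Loopless D) (c : β → β → α) :
    ∃ K, HKernel H D c K :=
  (h' β D hD fun u v => f (c u v)).imp fun K => (hKernel_comp_iff D c hf K).mp

open Classical in
noncomputable def identifyTwin {α : Type*} {x y : α} (hxy : x ≠ y) (a : α) : {z : α // z ≠ y} :=
  if ha : a = y then ⟨x, hxy⟩ else ⟨a, ha⟩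

lemma coe_identifyTwin_eq_or {α : Type*} {x y : α} (hxy : x ≠ y) (a : α) :
    (identifyTwin hxy a : α) = a ∨ a = y ∧ (identifyTwin hxy a : α) = x := by
  by_cases ha : a = y <;> simp [identifyTwin, ha]

section TrueTwins

variable {α : Type*} {H : α → α → Prop} {x y : α} (hxy : x ≠ y)

lemma rel_identifyTwin_left (htwin_out : ∀ z, H x z ↔ H y z) (a b : α) :
    H (identifyTwin hxy a) b ↔ H a b := by
  rcases coe_identifyTwin_eq_or hxy a with h | ⟨rfl, h⟩ <;> rw [h]
  exact htwin_out b

lemma rel_identifyTwin_right (htwin_in : ∀ z, H z x ↔ H z y) (a b : α) :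
    H a (identifyTwin hxy b) ↔ H a b := by
  rcases coe_identifyTwin_eq_or hxy b with h | ⟨rfl, h⟩ <;> rw [h]
  exact htwin_in a

lemma rel_iff_rel_identifyTwin (htwin_out : ∀ z, H x z ↔ H y z)
    (htwin_in : ∀ z, H z x ↔ H z y) (a b : α) :
    H a b ↔ H (identifyTwin hxy a) (identifyTwin hxy b) := by
  rw [rel_identifyTwin_left hxy htwin_out, rel_identifyTwin_right hxy htwin_in]

end TrueTwins

theorem stmt12_general {α : Type} (H : α → α → Prop) (x y : α) (hxy : x ≠ y)
    (htwin_out : ∀ z, H x z ↔ H y z) (htwin_in : ∀ z, H z x ↔ H z y) :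
    (∀ (β : Type) (D : β → β → Prop), Loopless D → ∀ c : β → β → α,
        ∃ K, HKernel H D c K) ↔
      (∀ (β : Type) (D : β → β → Prop), Loopless D → ∀ c : β → β → {z : α // z ≠ y},
        ∃ K, HKernel (fun a b : {z : α // z ≠ y} => H a b) D c K) :=
  ⟨forall_exists_hKernel_of_rel_iff Subtype.val fun _ _ => Iff.rfl,
    forall_exists_hKernel_of_rel_iff (identifyTwin hxy)
      (rel_iff_rel_identifyTwin hxy htwin_out htwin_in)⟩

/-- Let `x, y` be true twins in a reflexive pattern `H`. Then every
`H`-arc-coloured digraph has an `H`-kernel iff every `H_{xy}`-arc-coloured digraph has an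
`H_{xy}`-kernel, where `H_{xy}` (the contraction of `{x,y}`) is realised as the induced
subdigraph `H - y` on the subtype `{z // z ≠ y}`. -/
theorem stmt12 {α : Type} (H : α → α → Prop) (hrefl : Reflexive H) (x y : α) (hxy : x ≠ y)
    (htwin_out : ∀ z, H x z ↔ H y z) (htwin_in : ∀ z, H z x ↔ H z y) :
    (∀ (β : Type) (D : β → β → Prop), Loopless D → ∀ c : β → β → α,
        ∃ K, HKernel H D c K) ↔
      (∀ (β : Type) (D : β → β → Prop), Loopless D → ∀ c : β → β → {z : α // z ≠ y},
        ∃ K, HKernel (fun a b : {z : α // z ≠ y} => H a b) D c K) :=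
  stmt12_general H x y hxy htwin_out htwin_in
end

section
/- There exist a reflexive pattern H and an H-arc-coloured digraph D such that D has a kernel by H-walks but no H-kernel (kernel by H-paths). Specifically, with H on vertices {a₁, a₂, a₃} having suitable arcs, the digraph D on vertices {x, y, z, w} with the walk (x, y, z, y, w) being an H-walk ending at w has {w} as a kernel by H-walks, while every H-independent-by-paths set of D has cardinality one and none is H-absorbent, so D has no H-kernel. -/
/-!
In the digraph `x → y → z → y → w → x` the `H`-walk `(x, y, z, y, w)` visits `y` twice, and its
colours `a₁ a₂ a₃ a₃` form a walk in `H`; the only path from `x` to `w`, namely `(x, y, w)`, has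
colours `a₁ a₃`, which is not an arc of `H`. So by `H`-walks every vertex reaches `w`, and `{w}` is a
kernel by `H`-walks. By `H`-paths, however, `w` reaches only `x`, `x` reaches only `y` and `z`, and
`y` reaches only `z` and `w`. An `H`-kernel containing `w` must then omit `x`, `y` and `z` and fails
to absorb `x`; one omitting `w` must contain `x`, hence omit `y` and `z`, and fails to absorb `y`.
-/

section PathSearch

variable {α β : Type*} {H : α → α → Prop} {D : β → β → Prop} {c : β → β → α}

theorem wKernel_singleton {w : β} (hw : ∀ u ≠ w, HWalkReach H D c u w) :
    WKernel H D c {w} :=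
  ⟨fun u hu v hv huv => absurd (hu.trans hv.symm) huv, fun u hu => ⟨w, rfl, hw u hu⟩⟩

instance [DecidableRel H] [DecidableRel D] (l : List β) : Decidable (IsHWalk H D c l) :=
  inferInstanceAs (Decidable (2 ≤ l.length ∧ l.IsChain D ∧ (colourList c l).IsChain H))

instance [DecidableEq β] [DecidableRel H] [DecidableRel D] (l : List β) :
    Decidable (IsHPath H D c l) :=
  inferInstanceAs (Decidable (_ ∧ _))

/-- A path is a permutation of a sublist of any list `L` containing every vertex, so this
turns `H`-path reachability into a finite search. -/
theorem hPathReach_iff_exists_mem_sublists {L : List β} (hL : ∀ x, x ∈ L) {u v : β} :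
    HPathReach H D c u v ↔ ∃ s ∈ L.sublists, ∃ l ∈ s.permutations',
      IsHPath H D c l ∧ l.head? = some u ∧ l.getLast? = some v := by
  constructor
  · rintro ⟨l, hl, hu, hv⟩
    obtain ⟨s, hls, hsL⟩ := List.subperm_of_subset hl.2 fun x _ => hL x
    exact ⟨s, List.mem_sublists.2 hsL, l, List.mem_permutations'.2 hls.symm, hl, hu, hv⟩
  · rintro ⟨-, -, l, -, hl⟩
    exact ⟨l, hl⟩

end PathSearch

namespace PathKernelCounterexample

/-! The colours `a₁, a₂, a₃` are `0, 1, 2` and the vertices `x, y, z, w` are `0, 1, 2, 3`. -/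

def pattern : Fin 3 → Fin 3 → Prop :=
  fun a b => a = b ∨ (a = 0 ∧ b = 1) ∨ (a = 1 ∧ b = 2)

instance : DecidableRel pattern := fun _ _ => inferInstanceAs (Decidable (_ ∨ _))

def digraph : Fin 4 → Fin 4 → Prop :=
  fun u v => (u = 0 ∧ v = 1) ∨ (u = 1 ∧ v = 2) ∨ (u = 2 ∧ v = 1) ∨ (u = 1 ∧ v = 3) ∨
    (u = 3 ∧ v = 0)

instance : DecidableRel digraph := fun _ _ => inferInstanceAs (Decidable (_ ∨ _))

def colouring : Fin 4 → Fin 4 → Fin 3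
  | 0, 1 => 0
  | 1, 2 => 1
  | 3, 0 => 1
  | _, _ => 2

local notation "reach" => HPathReach pattern digraph colouring

theorem pattern_refl (a : Fin 3) : pattern a a := Or.inl rfl

theorem digraph_loopless : Loopless digraph := by
  unfold Loopless
  decide

theorem wKernel_three : WKernel pattern digraph colouring {3} := by
  refine wKernel_singleton fun u hu => ?_
  fin_cases u
  · exact ⟨[0, 1, 2, 1, 3], by decide, rfl, rfl⟩
  · exact ⟨[1, 3], by decide, rfl, rfl⟩
  · exact ⟨[2, 1, 3], by decide, rfl, rfl⟩
  · exact absurd rfl hu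

theorem hPathReach_three_iff (v : Fin 4) : reach 3 v ↔ v = 0 := by
  rw [hPathReach_iff_exists_mem_sublists List.mem_finRange]
  revert v
  decide

theorem hPathReach_zero_iff (v : Fin 4) : reach 0 v ↔ v = 1 ∨ v = 2 := by
  rw [hPathReach_iff_exists_mem_sublists List.mem_finRange]
  revert v
  decide

theorem hPathReach_one_iff (v : Fin 4) : reach 1 v ↔ v = 2 ∨ v = 3 := by
  rw [hPathReach_iff_exists_mem_sublists List.mem_finRange]
  revert v
  decide

theorem hPathReach_two_three : reach 2 3 := by
  rw [hPathReach_iff_exists_mem_sublists List.mem_finRange]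
  decide

theorem not_hKernel (K : Set (Fin 4)) : ¬ HKernel pattern digraph colouring K := by
  rintro ⟨hind, habs⟩
  by_cases h3 : 3 ∈ K
  · have h0 : 0 ∉ K := fun h0 => hind 3 h3 0 h0 (by decide) ((hPathReach_three_iff 0).2 rfl)
    obtain ⟨v, hvK, h0v⟩ := habs 0 h0
    rcases (hPathReach_zero_iff v).1 h0v with rfl | rfl
    · exact hind 1 hvK 3 h3 (by decide) ((hPathReach_one_iff 3).2 (Or.inr rfl))
    · exact hind 2 hvK 3 h3 (by decide) hPathReach_two_three
  · obtain ⟨v, h0K, h3v⟩ := habs 3 h3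
    obtain rfl := (hPathReach_three_iff v).1 h3v
    have h1 : 1 ∉ K := fun h1 =>
      hind 0 h0K 1 h1 (by decide) ((hPathReach_zero_iff 1).2 (Or.inl rfl))
    obtain ⟨w, hwK, h1w⟩ := habs 1 h1
    rcases (hPathReach_one_iff w).1 h1w with rfl | rfl
    · exact hind 0 h0K 2 hwK (by decide) ((hPathReach_zero_iff 2).2 (Or.inr rfl))
    · exact h3 hwK

end PathKernelCounterexample

open PathKernelCounterexample in
/-- There exist a reflexive pattern `H` and an `H`-arc-coloured digraph `D`
having a kernel by `H`-walks but no `H`-kernel (kernel by `H`-paths). -/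
theorem stmt17 :
    ∃ (α : Type) (H : α → α → Prop), Reflexive H ∧
      ∃ (β : Type) (D : β → β → Prop) (c : β → β → α),
        Loopless D ∧ (∃ K, WKernel H D c K) ∧ ¬ ∃ K, HKernel H D c K := by
  exact ⟨Fin 3, pattern, pattern_refl, Fin 4, digraph, colouring, digraph_loopless,
    ⟨{3}, wKernel_three⟩, fun ⟨K, hK⟩ => not_hKernel K hK⟩
end

section
/- There exist a reflexive pattern H and an H-arc-coloured digraph D such that D has an H-kernel (kernel by H-paths) but no kernel by H-walks. Specifically, there is a 5-vertex digraph D with vertices u, v, y, z (and appropriate arcs and colours) in which {u, v} is an H-kernel, yet (u, y, z, y, v) is an H-walk from u to v, so every independent-by-H-walks set has cardinality one and no single vertex is absorbent by H-walks. -/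
/-
Colour every arc by itself and let the pattern allow, besides loops, only the colour changes along
the walk `u → y → z → y → v`. That walk revisits `y` and is the only `H`-walk from `u` to `v`, so
`{u, v}` is an `H`-kernel. By `H`-walks, however, any two vertices are comparable, so a kernel by
`H`-walks would be a single vertex; but each vertex fails to be reached from some other vertex.
Non-reachability by `H`-walks is certified by an invariant: the set of arcs that can end an
`H`-walk from a given vertex.
-/

section

variable {α β : Type*} {H : α → α → Prop} {D : β → β → Prop} {c : β → β → α}

instance [DecidableRel H] [DecidableRel D] [DecidableEq β] (l : List β) :
    Decidable (IsHPath H D c l) :=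
  inferInstanceAs (Decidable (IsHWalk H D c l ∧ l.Nodup))

theorem HPathReach.hWalkReach {u v : β} : HPathReach H D c u v → HWalkReach H D c u v :=
  fun ⟨l, hl, hu, hv⟩ => ⟨l, hl.1, hu, hv⟩

theorem exists_state_getLast (S : β → α → Prop)
    (hstep : ∀ a x b, S a x → D a b → H x (c a b) → S b (c a b)) :
    ∀ (t : List β) (a : β) (x : α), S a x → (a :: t).IsChain D →
      (x :: colourList c (a :: t)).IsChain H → ∃ y, S ((a :: t).getLast (List.cons_ne_nil a t)) y
  | [], _, x, hS, _, _ => ⟨x, hS⟩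
  | b :: t, a, x, hS, hD, hH => by
    obtain ⟨hab, hD⟩ := List.isChain_cons_cons.mp hD
    obtain ⟨hx, hH⟩ := List.isChain_cons_cons.mp hH
    exact exists_state_getLast S hstep t b (c a b) (hstep a x b hS hab hx) hD hH

theorem HWalkReach.exists_state {u v : β} (S : β → α → Prop) (hstart : ∀ b, D u b → S b (c u b))
    (hstep : ∀ a x b, S a x → D a b → H x (c a b) → S b (c a b))
    (huv : HWalkReach H D c u v) : ∃ x, S v x := by
  obtain ⟨_ | ⟨u', _ | ⟨b, t⟩⟩, ⟨hlen, hD, hH⟩, hu, hv⟩ := huv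
  all_goals simp only [List.length_nil, List.length_singleton, List.head?_cons,
    Option.some.injEq] at hlen hu
  · omega
  · omega
  subst hu
  obtain ⟨hub, hD⟩ := List.isChain_cons_cons.mp hD
  rw [List.getLast?_cons_cons, List.getLast?_eq_some_getLast (List.cons_ne_nil b t),
    Option.some.injEq] at hv
  subst hv
  exact exists_state_getLast S hstep t b _ (hstart b hub) hD hH

theorem WIndep.subsingleton {K : Set β}
    (hcomp : ∀ s t, s ≠ t → HWalkReach H D c s t ∨ HWalkReach H D c t s)
    (hK : WIndep H D c K) : K.Subsingleton := by
  intro s hs t ht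
  by_contra hst
  rcases hcomp s t hst with h | h
  · exact hK s hs t ht hst h
  · exact hK t ht s hs (Ne.symm hst) h

theorem not_exists_wKernel [Nonempty β]
    (hcomp : ∀ s t, s ≠ t → HWalkReach H D c s t ∨ HWalkReach H D c t s)
    (hsource : ∀ s, ∃ t ≠ s, ¬ HWalkReach H D c t s) : ¬ ∃ K, WKernel H D c K := by
  rintro ⟨K, hindep, habs⟩
  have hK : K.Subsingleton := hindep.subsingleton hcomp
  obtain ⟨s, hs⟩ : K.Nonempty := by
    obtain ⟨b⟩ := ‹Nonempty β›
    by_cases hb : b ∈ K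
    · exact ⟨b, hb⟩
    · obtain ⟨v, hv, -⟩ := habs b hb
      exact ⟨v, hv⟩
  obtain ⟨t, hts, hnot⟩ := hsource s
  obtain ⟨v, hv, htv⟩ := habs t fun ht => hts (hK ht hs)
  exact hnot (hK hv hs ▸ htv)

end

namespace WalkKernelCounterexample

/-- The vertices `0, 1, 2, 3` are `u, y, z, v`; every arc is coloured by itself, and besides loops
`H` allows exactly the colour changes along the walk `(u, y, z, y, v)`. -/
def arcs : List (Fin 5 × Fin 5) := [(0, 1), (1, 2), (2, 1), (1, 3), (3, 4), (4, 0), (4, 1), (4, 2)]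

def D (a b : Fin 5) : Prop := (a, b) ∈ arcs

instance : DecidableRel D := fun a b => inferInstanceAs (Decidable ((a, b) ∈ arcs))

def c : Fin 5 → Fin 5 → Fin 5 × Fin 5 := Prod.mk

def H (x y : Fin 5 × Fin 5) : Prop :=
  x = y ∨ (x, y) ∈ [((0, 1), (1, 2)), ((1, 2), (2, 1)), ((2, 1), (1, 3))]

instance : DecidableRel H := fun _ _ => inferInstanceAs (Decidable (_ ∨ _))

/-- The arcs that can end an `H`-walk from a given vertex: closed under extending such a walk by
one arc, hence an invariant of `H`-walks. -/
def lastArcs : Fin 5 → List (Fin 5 × Fin 5)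
  | 0 => [(0, 1), (1, 2), (2, 1), (1, 3)]
  | 1 => [(1, 2), (2, 1), (1, 3)]
  | 2 => [(2, 1), (1, 3)]
  | 3 => [(3, 4)]
  | 4 => [(4, 0), (4, 1), (4, 2)]

theorem mem_lastArcs_of_hWalkReach {u v : Fin 5} (h : HWalkReach H D c u v) :
    ∃ x ∈ lastArcs u, x.2 = v := by
  have hstart : ∀ u b, D u b → (u, b) ∈ lastArcs u := by decide
  have hstep : ∀ u x b, x ∈ lastArcs u → D x.2 b → H x (x.2, b) → (x.2, b) ∈ lastArcs u := by
    decide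
  obtain ⟨x, hx, rfl⟩ := h.exists_state (fun b x => x ∈ lastArcs u ∧ x.2 = b)
    (fun b hb => ⟨hstart u b hb, rfl⟩)
    (fun _ x b ⟨hx, hxa⟩ hab hH => ⟨hxa ▸ hstep u x b hx (hxa ▸ hab) (hxa ▸ hH), rfl⟩)
  exact ⟨x, hx, rfl⟩

def comparingWalks : List (List (Fin 5)) :=
  [[0, 1], [0, 1, 2], [0, 1, 2, 1, 3], [1, 2], [1, 3], [2, 1, 3], [3, 4], [4, 0], [4, 1], [4, 2]]

theorem hWalkReach_or_hWalkReach {s t : Fin 5} (hst : s ≠ t) :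
    HWalkReach H D c s t ∨ HWalkReach H D c t s := by
  have hwalks : ∀ w ∈ comparingWalks, IsHWalk H D c w := by decide
  obtain ⟨w, hw, h | h⟩ : ∃ w ∈ comparingWalks, (w.head? = some s ∧ w.getLast? = some t) ∨
      (w.head? = some t ∧ w.getLast? = some s) := by
    revert s t; decide
  · exact .inl ⟨w, hwalks w hw, h⟩
  · exact .inr ⟨w, hwalks w hw, h⟩

theorem not_hPathReach_zero_three : ¬ HPathReach H D c 0 3 := by
  rintro ⟨l, hl, hhead, hlast⟩
  have hlen : l.length ≤ 5 := by simpa using hl.2.length_le_card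
  match l, hl, hhead, hlast, hlen with
  | [], _, h, _, _ => simp at h
  | [_], hl, _, _, _ => exact absurd hl.1.1 (by simp)
  | [a, b], hl, hhead, hlast, _ => revert a b; decide
  | [a, b, d], hl, hhead, hlast, _ => revert a b d; decide
  | [a, b, d, e], hl, hhead, hlast, _ => revert a b d e; decide
  | [a, b, d, e, f], hl, hhead, hlast, _ => revert a b d e f; decide

theorem hKernel : HKernel H D c {0, 3} := by
  refine ⟨?_, ?_⟩
  · rintro u (rfl | rfl) v (rfl | rfl) huv h
    · exact huv rfl
    · exact not_hPathReach_zero_three h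
    · obtain ⟨x, hx, hx0⟩ := mem_lastArcs_of_hWalkReach h.hWalkReach
      revert x; decide
    · exact huv rfl
  · intro w hw
    simp only [Set.mem_insert_iff, Set.mem_singleton_iff, not_or] at hw
    fin_cases w
    · exact absurd rfl hw.1
    · exact ⟨3, by simp, [1, 3], by decide, rfl, rfl⟩
    · exact ⟨3, by simp, [2, 1, 3], by decide, rfl, rfl⟩
    · exact absurd rfl hw.2
    · exact ⟨0, by simp, [4, 0], by decide, rfl, rfl⟩

theorem exists_not_hWalkReach (s : Fin 5) : ∃ t ≠ s, ¬ HWalkReach H D c t s := by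
  obtain ⟨t, hts, ht⟩ : ∃ t ≠ s, ∀ x ∈ lastArcs t, x.2 ≠ s := by revert s; decide
  exact ⟨t, hts, fun h => by
    obtain ⟨x, hx, rfl⟩ := mem_lastArcs_of_hWalkReach h
    exact ht x hx rfl⟩

end WalkKernelCounterexample

/-- There exist a reflexive pattern `H` and an `H`-arc-coloured digraph `D`
having an `H`-kernel (kernel by `H`-paths) but no kernel by `H`-walks. -/
theorem stmt18 :
    ∃ (α : Type) (H : α → α → Prop), Reflexive H ∧
      ∃ (β : Type) (D : β → β → Prop) (c : β → β → α),
        Loopless D ∧ (∃ K, HKernel H D c K) ∧ ¬ ∃ K, WKernel H D c K := by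
  open WalkKernelCounterexample in
  exact ⟨_, H, fun _ => .inl rfl, _, D, c, by unfold Loopless; decide, ⟨_, hKernel⟩,
    not_exists_wKernel (fun _ _ => hWalkReach_or_hWalkReach) exists_not_hWalkReach⟩
end
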